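/- arXiv:2602.16142 — 5 statements merged into one kernel-verified Lean document; each statement's English description precedes it below -/
import Mathlib

section
/- For every real number h > 0, it holds that h·log(h) − h + 1 ≤ (1/(√e − 1)²) · (√h − 1)² · max{1, log h}. -/
/-!
Write `h = s²` and `K = (√e - 1)²`, so that the claim reads
`K · klFun (s²) ≤ (s - 1)² · max 1 (2 log s)` with `klFun (s²) = 2 s² log s - s² + 1`.
Both sides are linear in `log s`, so each upper bound `log s ≤ r(s)` by an elementary function
turns the claim into an inequality between polynomials in `s`. Near `s = 1` the bounds come from
the series `log s = 2 ∑ z^(2k+1)/(2k+1)` in `z = (s - 1)/(s + 1)`, cut after the first term for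
`s ≤ 1` and dominated by a geometric series for `s ≥ 1`; near `s = √e`, where equality holds, the
tangent line of `log` at `√e` is used. For `s ≥ √e` the difference of the two sides is linear in
`log s ∈ [1/2, s/√e - 1/2]` and is checked at both ends.
-/

open Real

namespace Real

theorem hasSum_log_of_pos {s : ℝ} (hs : 0 < s) :
    HasSum (fun k : ℕ => 2 * (1 / (2 * k + 1)) * ((s - 1) / (s + 1)) ^ (2 * k + 1)) (log s) := by
  have hz : |(s - 1) / (s + 1)| < 1 := by
    rw [abs_div, abs_of_pos (by linarith : 0 < s + 1), div_lt_one (by linarith), abs_lt]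
    constructor <;> linarith
  have h₁ : 1 + (s - 1) / (s + 1) = 2 * s / (s + 1) := by field_simp; ring
  have h₂ : 1 - (s - 1) / (s + 1) = 2 / (s + 1) := by field_simp; ring
  convert hasSum_log_sub_log_of_abs_lt_one hz using 1
  rw [h₁, h₂, ← log_div (by positivity) (by positivity)]
  congr 1
  field_simp

theorem log_le_two_mul_sub_one_div_add_one {s : ℝ} (hs₀ : 0 < s) (hs₁ : s ≤ 1) :
    log s ≤ 2 * (s - 1) / (s + 1) := by
  have hz : (s - 1) / (s + 1) ≤ 0 := div_nonpos_of_nonpos_of_nonneg (by linarith) (by linarith)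
  refine hasSum_le (fun k => ?_) (hasSum_log_of_pos hs₀) (hasSum_ite_eq 0 _)
  rcases k with _ | k
  · simp [mul_div_assoc]
  · have : ((s - 1) / (s + 1)) ^ (2 * (k + 1) + 1) ≤ 0 := Odd.pow_nonpos ⟨k + 1, rfl⟩ hz
    simp only [Nat.add_one_ne_zero, if_false]
    exact mul_nonpos_of_nonneg_of_nonpos (by positivity) this

theorem log_le_sub_one_mul_div_of_one_le {s : ℝ} (hs : 1 ≤ s) :
    log s ≤ (s - 1) * (s ^ 2 + 10 * s + 1) / (6 * s * (s + 1)) := by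
  have hf := hasSum_log_of_pos (by linarith : 0 < s)
  set z := (s - 1) / (s + 1) with hz_def
  have hz₀ : 0 ≤ z := div_nonneg (by linarith) (by linarith)
  have hz₂ : 1 - z ^ 2 = 4 * s / (s + 1) ^ 2 := by rw [hz_def]; field_simp; ring
  have hz₁ : z ^ 2 < 1 := by
    have : 0 < 4 * s / (s + 1) ^ 2 := by positivity
    linarith
  have hg : HasSum (fun k : ℕ => 2 / 3 * z * (z ^ 2) ^ k + if k = 0 then 4 / 3 * z else 0)
      (2 / 3 * z * (1 - z ^ 2)⁻¹ + 4 / 3 * z) :=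
    ((hasSum_geometric_of_lt_one (sq_nonneg z) hz₁).mul_left _).add (hasSum_ite_eq 0 _)
  refine (hasSum_le (fun k => ?_) hf hg).trans_eq ?_
  · rcases k with _ | k
    · norm_num; linarith
    · have hk : (1 : ℝ) / (2 * (k + 1 : ℕ) + 1) ≤ 1 / 3 := by
        gcongr; push_cast; linarith [k.cast_nonneg (α := ℝ)]
      have : z ^ (2 * (k + 1) + 1) = z * (z ^ 2) ^ (k + 1) := by
        rw [pow_succ', pow_mul]
      simp only [Nat.add_one_ne_zero, if_false, add_zero, this]
      nlinarith [mul_nonneg hz₀ (pow_nonneg (sq_nonneg z) (k + 1))]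
  · rw [hz₂, hz_def]
    have : s ≠ 0 := by positivity
    field_simp
    ring

theorem log_le_log_add_div_sub_one {a s : ℝ} (ha : 0 < a) (hs : 0 < s) :
    log s ≤ log a + s / a - 1 := by
  have := log_le_sub_one_of_pos (div_pos hs ha)
  rw [log_div hs.ne' ha.ne'] at this
  linarith

theorem log_le_div_sqrt_exp_one_sub_half {s : ℝ} (hs : 0 < s) :
    log s ≤ s / √(exp 1) - 1 / 2 := by
  have := log_le_log_add_div_sub_one (sqrt_pos.2 (exp_pos 1)) hs
  rw [log_sqrt (exp_pos 1).le, log_exp] at this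
  linarith

theorem lt_sqrt_exp_one : 1.6487 < √(exp 1) := by
  rw [lt_sqrt (by norm_num)]
  linarith [exp_one_gt_d9]

theorem sqrt_exp_one_lt : √(exp 1) < 1.6488 := by
  rw [sqrt_lt' (by norm_num)]
  linarith [exp_one_lt_d9]

theorem sq_sqrt_exp_one_sub_one_lt : (√(exp 1) - 1) ^ 2 < 53 / 125 := by
  nlinarith [lt_sqrt_exp_one, sqrt_exp_one_lt]

end Real

namespace InformationTheory

theorem klFun_sq (s : ℝ) : klFun (s ^ 2) = 2 * s ^ 2 * log s - s ^ 2 + 1 := by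
  rw [klFun_apply, log_pow]
  push_cast
  ring

theorem mul_klFun_sq_le_of_le_one {K s : ℝ} (hK₀ : 0 ≤ K) (hK : K ≤ 1 / 2) (hs₀ : 0 < s)
    (hs₁ : s ≤ 1) : K * klFun (s ^ 2) ≤ (s - 1) ^ 2 := by
  have hlog := log_le_two_mul_sub_one_div_add_one hs₀ hs₁
  have hkl : klFun (s ^ 2) * (s + 1) ≤ (s - 1) ^ 2 * (3 * s + 1) := by
    rw [klFun_sq]
    rw [le_div_iff₀ (by linarith)] at hlog
    nlinarith [sq_nonneg s]
  have hK' : K * (3 * s + 1) ≤ s + 1 := by nlinarith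
  refine le_of_mul_le_mul_right ?_ (by linarith : 0 < s + 1)
  nlinarith [mul_le_mul_of_nonneg_left hkl hK₀, mul_le_mul_of_nonneg_left hK' (sq_nonneg (s - 1))]

theorem mul_klFun_sq_le_of_one_le_of_le {K s : ℝ} (hK₀ : 0 ≤ K) (hK : K ≤ 53 / 125) (hs₁ : 1 ≤ s)
    (hs : s ≤ 8 / 5) : K * klFun (s ^ 2) ≤ (s - 1) ^ 2 := by
  have hlog := log_le_sub_one_mul_div_of_one_le hs₁
  have hkl : klFun (s ^ 2) * (3 * (s + 1)) ≤ (s - 1) ^ 2 * (s ^ 2 + 8 * s + 3) := by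
    rw [klFun_sq]
    rw [le_div_iff₀ (by positivity)] at hlog
    nlinarith [sq_nonneg s]
  have hK' : K * (s ^ 2 + 8 * s + 3) ≤ 3 * (s + 1) := by nlinarith
  refine le_of_mul_le_mul_right ?_ (by linarith : 0 < 3 * (s + 1))
  nlinarith [mul_le_mul_of_nonneg_left hkl hK₀, mul_le_mul_of_nonneg_left hK' (sq_nonneg (s - 1))]

theorem mul_klFun_sq_le_of_le_sqrt_exp_one {s : ℝ} (hs₀ : 8 / 5 ≤ s) (hs : s ≤ √(exp 1)) :
    (√(exp 1) - 1) ^ 2 * klFun (s ^ 2) ≤ (s - 1) ^ 2 := by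
  have hlog := log_le_div_sqrt_exp_one_sub_half (by linarith : 0 < s)
  have hE₀ := lt_sqrt_exp_one
  have hE₁ := sqrt_exp_one_lt
  set E := √(exp 1)
  rw [le_sub_iff_add_le, le_div_iff₀ (by linarith)] at hlog
  have hG : 0 ≤ 2 * s ^ 2 * (E - 1) ^ 2 - s * E - E ^ 2 + 2 * E := by
    have hK : 0.42 ≤ (E - 1) ^ 2 := by nlinarith
    have hG₀ : 0 ≤ 5.12 * (E - 1) ^ 2 + 0.4 * E - E ^ 2 := by nlinarith
    nlinarith [mul_nonneg (by linarith : (0:ℝ) ≤ s - 8 / 5)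
      (by nlinarith : (0:ℝ) ≤ 2 * (E - 1) ^ 2 * (s + 8 / 5) - E)]
  -- after multiplying by `E` and bounding `E * log s`, the gap factors as `(E - s) * G`
  refine le_of_mul_le_mul_left ?_ (by linarith : 0 < E)
  rw [klFun_sq]
  nlinarith [mul_le_mul_of_nonneg_left hlog (by positivity : 0 ≤ 2 * s ^ 2 * (E - 1) ^ 2),
    mul_nonneg (by linarith : 0 ≤ E - s) hG]

theorem mul_klFun_sq_le_of_sqrt_exp_one_le {s : ℝ} (hs : √(exp 1) ≤ s) :
    (√(exp 1) - 1) ^ 2 * klFun (s ^ 2) ≤ (s - 1) ^ 2 * log (s ^ 2) := by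
  have hs₀ : 0 < s := (sqrt_pos.2 (exp_pos 1)).trans_le hs
  have hlog := log_le_div_sqrt_exp_one_sub_half hs₀
  have hlog' : 1 / 2 ≤ log s := by
    have := log_le_log (sqrt_pos.2 (exp_pos 1)) hs
    rwa [log_sqrt (exp_pos 1).le, log_exp] at this
  have hE₀ := lt_sqrt_exp_one
  have hE₁ := sqrt_exp_one_lt
  set E := √(exp 1)
  rw [le_sub_iff_add_le, le_div_iff₀ (by linarith)] at hlog
  rw [klFun_sq, log_pow]
  push_cast
  rcases le_or_gt ((E - 1) ^ 2 * s ^ 2) ((s - 1) ^ 2) with hc | hc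
  · nlinarith [mul_le_mul hs hs (by linarith) (by linarith),
      mul_le_mul_of_nonneg_left hlog' (by linarith : 0 ≤ (s - 1) ^ 2 - (E - 1) ^ 2 * s ^ 2)]
  · have hG : 0 < 2 * E * (2 - E) * s ^ 2 + (E - 4) * s + (E - 1) ^ 2 + 1 := by
      have ha : 1.15 ≤ 2 * E * (2 - E) := by nlinarith
      nlinarith [mul_nonneg (by linarith : (0:ℝ) ≤ s - 8 / 5)
        (by nlinarith : (0:ℝ) ≤ 2 * E * (2 - E) * (s + 8 / 5) + (E - 4))]
    -- at `E * log s = s - E / 2` the gap, multiplied by `E`, factors as `(s - E) * G`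
    refine le_of_mul_le_mul_left ?_ (by linarith : 0 < E)
    nlinarith [mul_le_mul_of_nonneg_left hlog (by linarith : 0 ≤ (E - 1) ^ 2 * s ^ 2 - (s - 1) ^ 2),
      mul_nonneg (by linarith : 0 ≤ s - E) hG.le]

theorem mul_klFun_sq_le {s : ℝ} (hs : 0 < s) :
    (√(exp 1) - 1) ^ 2 * klFun (s ^ 2) ≤ (s - 1) ^ 2 * max 1 (log (s ^ 2)) := by
  rcases le_total s √(exp 1) with hsE | hsE
  · refine le_trans ?_ (le_mul_of_one_le_right (sq_nonneg _) (le_max_left _ _))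
    have hK := sq_sqrt_exp_one_sub_one_lt
    rcases le_total s 1 with hs₁ | hs₁
    · exact mul_klFun_sq_le_of_le_one (sq_nonneg _) (by linarith) hs hs₁
    rcases le_total s (8 / 5) with hs₂ | hs₂
    · exact mul_klFun_sq_le_of_one_le_of_le (sq_nonneg _) hK.le hs₁ hs₂
    · exact mul_klFun_sq_le_of_le_sqrt_exp_one hs₂ hsE
  · exact (mul_klFun_sq_le_of_sqrt_exp_one_le hsE).trans
      (mul_le_mul_of_nonneg_left (le_max_right _ _) (sq_nonneg _))

end InformationTheory

open InformationTheory in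
theorem stmt_0 (h : ℝ) (hh : 0 < h) :
    h * Real.log h - h + 1 ≤
      (1 / (Real.sqrt (Real.exp 1) - 1) ^ 2) * (Real.sqrt h - 1) ^ 2 *
        max 1 (Real.log h) := by
  obtain ⟨s, hs, rfl⟩ : ∃ s, 0 < s ∧ s ^ 2 = h := ⟨√h, sqrt_pos.2 hh, sq_sqrt hh.le⟩
  have hK : 0 < (√(exp 1) - 1) ^ 2 := by nlinarith [lt_sqrt_exp_one]
  calc s ^ 2 * log (s ^ 2) - s ^ 2 + 1 = klFun (s ^ 2) := by rw [klFun_apply]; ring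
    _ ≤ 1 / (√(exp 1) - 1) ^ 2 * (√(s ^ 2) - 1) ^ 2 * max 1 (log (s ^ 2)) := by
      rw [sqrt_sq hs.le, mul_assoc, one_div_mul_eq_div, le_div_iff₀ hK, mul_comm]
      exact mul_klFun_sq_le hs
end

section
/- Let f and g be probability densities on a measure space (X, μ). Then KL(f, g) ≤ (2/(√e − 1)²) · H²(f, g) · max{1, sup_{x∈X} log(f(x)/g(x))}, where KL(f,g) = ∫ f log(f/g) dμ and H²(f,g) = (1/2)∫ (√f − √g)² dμ. -/
open MeasureTheory

noncomputable def sE : ℝ := Real.sqrt (Real.exp 1)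
noncomputable def cE : ℝ := ((sE - 1) ^ 2)⁻¹

lemma sE_sq : sE ^ 2 = Real.exp 1 := Real.sq_sqrt (Real.exp_pos 1).le

lemma sE_nonneg : 0 ≤ sE := Real.sqrt_nonneg _

lemma sE_lb : (1.6487 : ℝ) ≤ sE := by
  nlinarith [sE_sq, sE_nonneg, Real.exp_one_gt_d9]

lemma sE_ub : sE ≤ (1.6488 : ℝ) := by
  nlinarith [sE_sq, sE_nonneg, Real.exp_one_lt_d9]

lemma sE_pos : (0:ℝ) < sE := lt_of_lt_of_le (by norm_num) sE_lb

lemma q_lb : (0.42081 : ℝ) ≤ (sE - 1) ^ 2 := by nlinarith [sE_lb, sE_ub]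
lemma q_ub : (sE - 1) ^ 2 ≤ (0.4209415 : ℝ) := by nlinarith [sE_lb, sE_ub]

lemma cE_mul : cE * (sE - 1) ^ 2 = 1 := by
  rw [cE]
  exact inv_mul_cancel₀ (by nlinarith [q_lb])

lemma cE_pos : (0:ℝ) < cE := by
  rw [cE]; exact inv_pos.mpr (by nlinarith [q_lb])

lemma cE_lb : (2.3756 : ℝ) ≤ cE := by nlinarith [cE_mul, q_ub, cE_pos]
lemma cE_ub : cE ≤ (2.3764 : ℝ) := by nlinarith [cE_mul, q_lb, cE_pos]

lemma log_sE : Real.log sE = 1 / 2 := by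
  rw [sE, Real.log_sqrt (Real.exp_pos 1).le, Real.log_exp]

noncomputable def tst : ℝ := Real.exp ((cE - 2) / 2)

lemma log_tst : Real.log tst = (cE - 2) / 2 := Real.log_exp _
lemma tst_pos : (0:ℝ) < tst := Real.exp_pos _
lemma tst_ge_one : (1:ℝ) ≤ tst := Real.one_le_exp (by nlinarith [cE_lb])
lemma tst_le_sE : tst ≤ sE := by
  rw [tst, ← Real.le_log_iff_exp_le sE_pos, log_sE]
  nlinarith [cE_ub]

noncomputable def AA : ℝ → ℝ := fun x => cE * (x - 1) ^ 2 + x ^ 2 - 1 - 2 * (x ^ 2 * Real.log x)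
noncomputable def AA1 : ℝ → ℝ := fun x => 2 * cE * (x - 1) - 4 * (x * Real.log x)
noncomputable def HH : ℝ → ℝ := fun x =>
  cE * (x - 1) ^ 2 * (2 * Real.log x) - (2 * (x ^ 2 * Real.log x) - x ^ 2 + 1)
noncomputable def HH1 : ℝ → ℝ := fun x =>
  2 * cE * (x - 1) * (2 * Real.log x) + cE * (x - 1) ^ 2 * (2 * x⁻¹) - 4 * (x * Real.log x)

lemma hd_xxlog {u : ℝ} (hu : u ≠ 0) :
    HasDerivAt (fun x : ℝ => x ^ 2 * Real.log x) (2 * u * Real.log u + u) u := by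
  have h := (hasDerivAt_pow 2 u).mul (Real.hasDerivAt_log hu)
  refine h.congr_deriv (Eq.symm ?_)
  field_simp
  ring

lemma hd_xlog {u : ℝ} (hu : u ≠ 0) :
    HasDerivAt (fun x : ℝ => x * Real.log x) (Real.log u + 1) u := by
  have h := (hasDerivAt_id u).mul (Real.hasDerivAt_log hu)
  refine h.congr_deriv (Eq.symm ?_)
  field_simp
  simp only [id_eq]
  ring

lemma hd_AA {u : ℝ} (hu : u ≠ 0) : HasDerivAt AA (AA1 u) u := by
  have h1 : HasDerivAt (fun x : ℝ => cE * (x - 1) ^ 2 + x ^ 2 - 1)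
      (cE * (2 * (u - 1)) + 2 * u) u := by
    have h := ((((hasDerivAt_id u).sub_const 1).pow 2).const_mul cE).add
      (hasDerivAt_pow 2 u) |>.sub_const 1
    refine h.congr_deriv (Eq.symm ?_)
    simp only [id_eq]
    push_cast
    ring
  have h2 := (hd_xxlog hu).const_mul 2
  have h := h1.sub h2
  refine h.congr_deriv (Eq.symm ?_)
  simp only [AA1]
  ring

lemma hd_AA1 {u : ℝ} (hu : u ≠ 0) :
    HasDerivAt AA1 (2 * cE - 4 * (Real.log u + 1)) u := by
  have h1 : HasDerivAt (fun x : ℝ => 2 * cE * (x - 1)) (2 * cE) u := by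
    have h := ((hasDerivAt_id u).sub_const 1).const_mul (2 * cE)
    refine h.congr_deriv (Eq.symm ?_)
    ring
  have h := h1.sub ((hd_xlog hu).const_mul 4)
  exact h

lemma hd_HH {u : ℝ} (hu : u ≠ 0) : HasDerivAt HH (HH1 u) u := by
  have h1 : HasDerivAt (fun x : ℝ => cE * (x - 1) ^ 2) (cE * (2 * (u - 1))) u := by
    have h := (((hasDerivAt_id u).sub_const 1).pow 2).const_mul cE
    refine h.congr_deriv (Eq.symm ?_)
    simp only [id_eq]
    push_cast
    ring
  have h2 : HasDerivAt (fun x : ℝ => 2 * Real.log x) (2 * u⁻¹) u :=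
    (Real.hasDerivAt_log hu).const_mul 2
  have h3 : HasDerivAt (fun x : ℝ => 2 * (x ^ 2 * Real.log x) - x ^ 2 + 1)
      (2 * (2 * u * Real.log u + u) - 2 * u) u := by
    have h := ((hd_xxlog hu).const_mul 2).sub (hasDerivAt_pow 2 u) |>.add_const 1
    refine h.congr_deriv (Eq.symm ?_)
    push_cast
    ring
  have h := (h1.mul h2).sub h3
  refine h.congr_deriv (Eq.symm ?_)
  simp only [HH1]
  field_simp
  ring

lemma AA_one : AA 1 = 0 := by simp [AA]

lemma AA1_one : AA1 1 = 0 := by simp [AA1]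

lemma AA_sE : AA sE = 0 := by
  have h := cE_mul
  simp only [AA, log_sE]
  nlinarith [sE_sq]

lemma HH_sE : HH sE = 0 := by
  have h := cE_mul
  simp only [HH, log_sE]
  nlinarith [sE_sq]

lemma contOn_AA1 {a b : ℝ} (ha : 0 < a) : ContinuousOn AA1 (Set.Icc a b) :=
  fun x hx => ((hd_AA1 (ne_of_gt (lt_of_lt_of_le ha hx.1))).differentiableAt).continuousAt.continuousWithinAt

lemma contOn_AA {a b : ℝ} (ha : 0 < a) : ContinuousOn AA (Set.Icc a b) :=
  fun x hx => ((hd_AA (ne_of_gt (lt_of_lt_of_le ha hx.1))).differentiableAt).continuousAt.continuousWithinAt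

lemma contOn_HH {a b : ℝ} (ha : 0 < a) : ContinuousOn HH (Set.Icc a b) :=
  fun x hx => ((hd_HH (ne_of_gt (lt_of_lt_of_le ha hx.1))).differentiableAt).continuousAt.continuousWithinAt

lemma AA1_nonpos {u : ℝ} (hu : 0 < u) (hu1 : u ≤ 1) : AA1 u ≤ 0 := by
  have mono : MonotoneOn AA1 (Set.Icc u 1) := by
    apply monotoneOn_of_deriv_nonneg (convex_Icc u 1) (contOn_AA1 hu)
    · intro x hx
      rw [interior_Icc] at hx
      exact ((hd_AA1 (ne_of_gt (lt_trans hu hx.1))).differentiableAt).differentiableWithinAt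
    · intro x hx
      rw [interior_Icc] at hx
      rw [(hd_AA1 (ne_of_gt (lt_trans hu hx.1))).deriv]
      have hlx : Real.log x ≤ 0 := Real.log_nonpos (le_of_lt (lt_trans hu hx.1)) hx.2.le
      nlinarith [cE_lb]
  have h := mono (Set.left_mem_Icc.mpr hu1) (Set.right_mem_Icc.mpr hu1) hu1
  rw [AA1_one] at h
  exact h

lemma AA1_nonneg {u : ℝ} (hu : 1 ≤ u) (hut : u ≤ tst) : 0 ≤ AA1 u := by
  have mono : MonotoneOn AA1 (Set.Icc 1 u) := by
    apply monotoneOn_of_deriv_nonneg (convex_Icc 1 u) (contOn_AA1 one_pos)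
    · intro x hx
      rw [interior_Icc] at hx
      exact ((hd_AA1 (ne_of_gt (lt_trans one_pos hx.1))).differentiableAt).differentiableWithinAt
    · intro x hx
      rw [interior_Icc] at hx
      rw [(hd_AA1 (ne_of_gt (lt_trans one_pos hx.1))).deriv]
      have hx0 : (0:ℝ) < x := lt_trans one_pos hx.1
      have hlt : Real.log x ≤ Real.log tst :=
        (Real.log_le_log_iff hx0 tst_pos).mpr (le_trans hx.2.le hut)
      rw [log_tst] at hlt
      linarith
  have h := mono (Set.left_mem_Icc.mpr hu) (Set.right_mem_Icc.mpr hu) hu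
  rw [AA1_one] at h
  exact h

lemma AA1_anti : AntitoneOn AA1 (Set.Icc tst sE) := by
  apply antitoneOn_of_deriv_nonpos (convex_Icc tst sE) (contOn_AA1 tst_pos)
  · intro x hx
    rw [interior_Icc] at hx
    exact ((hd_AA1 (ne_of_gt (lt_trans tst_pos hx.1))).differentiableAt).differentiableWithinAt
  · intro x hx
    rw [interior_Icc] at hx
    rw [(hd_AA1 (ne_of_gt (lt_trans tst_pos hx.1))).deriv]
    have hlt : Real.log tst ≤ Real.log x :=
      (Real.log_le_log_iff tst_pos (lt_trans tst_pos hx.1)).mpr hx.1.le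
    rw [log_tst] at hlt
    linarith

lemma AA_nonneg_left {t : ℝ} (ht : 0 < t) (ht1 : t ≤ 1) : 0 ≤ AA t := by
  have anti : AntitoneOn AA (Set.Icc t 1) := by
    apply antitoneOn_of_deriv_nonpos (convex_Icc t 1) (contOn_AA ht)
    · intro x hx
      rw [interior_Icc] at hx
      exact ((hd_AA (ne_of_gt (lt_trans ht hx.1))).differentiableAt).differentiableWithinAt
    · intro x hx
      rw [interior_Icc] at hx
      rw [(hd_AA (ne_of_gt (lt_trans ht hx.1))).deriv]
      exact AA1_nonpos (lt_trans ht hx.1) hx.2.le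
  have h := anti (Set.left_mem_Icc.mpr ht1) (Set.right_mem_Icc.mpr ht1) ht1
  rw [AA_one] at h
  exact h

lemma AA_nonneg_mid {t : ℝ} (ht : 1 ≤ t) (htt : t ≤ tst) : 0 ≤ AA t := by
  have mono : MonotoneOn AA (Set.Icc 1 t) := by
    apply monotoneOn_of_deriv_nonneg (convex_Icc 1 t) (contOn_AA one_pos)
    · intro x hx
      rw [interior_Icc] at hx
      exact ((hd_AA (ne_of_gt (lt_trans one_pos hx.1))).differentiableAt).differentiableWithinAt
    · intro x hx
      rw [interior_Icc] at hx
      rw [(hd_AA (ne_of_gt (lt_trans one_pos hx.1))).deriv]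
      exact AA1_nonneg hx.1.le (le_trans hx.2.le htt)
  have h := mono (Set.left_mem_Icc.mpr ht) (Set.right_mem_Icc.mpr ht) ht
  rw [AA_one] at h
  exact h

lemma AA_nonneg_right {t : ℝ} (htt : tst ≤ t) (hts : t ≤ sE) : 0 ≤ AA t := by
  rcases le_or_gt 0 (AA1 t) with hpos | hneg
  · have mono : MonotoneOn AA (Set.Icc tst t) := by
      apply monotoneOn_of_deriv_nonneg (convex_Icc tst t) (contOn_AA tst_pos)
      · intro x hx
        rw [interior_Icc] at hx
        exact ((hd_AA (ne_of_gt (lt_trans tst_pos hx.1))).differentiableAt).differentiableWithinAt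
      · intro x hx
        rw [interior_Icc] at hx
        rw [(hd_AA (ne_of_gt (lt_trans tst_pos hx.1))).deriv]
        have := AA1_anti (Set.mem_Icc.mpr ⟨hx.1.le, le_trans hx.2.le hts⟩)
          (Set.mem_Icc.mpr ⟨htt, hts⟩) hx.2.le
        linarith
    have h := mono (Set.left_mem_Icc.mpr htt) (Set.right_mem_Icc.mpr htt) htt
    have h0 := AA_nonneg_mid tst_ge_one (le_refl tst)
    linarith
  · have anti : AntitoneOn AA (Set.Icc t sE) := by
      apply antitoneOn_of_deriv_nonpos (convex_Icc t sE) (contOn_AA (lt_of_lt_of_le tst_pos htt))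
      · intro x hx
        rw [interior_Icc] at hx
        exact ((hd_AA (ne_of_gt (lt_trans (lt_of_lt_of_le tst_pos htt) hx.1))).differentiableAt).differentiableWithinAt
      · intro x hx
        rw [interior_Icc] at hx
        rw [(hd_AA (ne_of_gt (lt_trans (lt_of_lt_of_le tst_pos htt) hx.1))).deriv]
        have := AA1_anti (Set.mem_Icc.mpr ⟨htt, hts⟩)
          (Set.mem_Icc.mpr ⟨le_trans htt hx.1.le, hx.2.le⟩) hx.1.le
        linarith
    have h := anti (Set.left_mem_Icc.mpr hts) (Set.right_mem_Icc.mpr hts) hts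
    rw [AA_sE] at h
    exact h

lemma regimeA {t : ℝ} (ht : 0 < t) (hts : t ≤ sE) :
    2 * t ^ 2 * Real.log t - t ^ 2 + 1 ≤ cE * (t - 1) ^ 2 := by
  have h : 0 ≤ AA t := by
    rcases le_total t 1 with h1 | h1
    · exact AA_nonneg_left ht h1
    · rcases le_total t tst with h2 | h2
      · exact AA_nonneg_mid h1 h2
      · exact AA_nonneg_right h2 hts
  simp only [AA] at h
  linarith

lemma HH1_nonneg {u : ℝ} (hu : sE ≤ u) : 0 ≤ HH1 u := by
  have hu1 : (1.6487 : ℝ) ≤ u := le_trans sE_lb hu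
  have hu0 : (0:ℝ) < u := by linarith
  have hlog0 : 0 ≤ Real.log u := Real.log_nonneg (by linarith)
  have hsq : 0 ≤ cE * (u - 1) ^ 2 * (2 * u⁻¹) := by
    have h1 : (0:ℝ) ≤ u⁻¹ := inv_nonneg.mpr hu0.le
    have := cE_pos
    positivity
  rcases le_or_gt u (cE * (u - 1)) with hbr | hbr
  · have h1 : 0 ≤ 4 * Real.log u * (cE * (u - 1) - u) :=
      mul_nonneg (by linarith) (by linarith)
    simp only [HH1]
    nlinarith [h1, hsq]
  · have hlog : Real.log u ≤ u - 1 := Real.log_le_sub_one_of_pos hu0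
    have key : 4 * (u - 1) * (cE * (u - 1) - u) ≤ 4 * Real.log u * (cE * (u - 1) - u) := by
      have h := mul_le_mul_of_nonpos_right hlog (by linarith : cE * (u - 1) - u ≤ 0)
      linarith
    have hG : 0 ≤ cE * (2 * u + 1) * (u - 1) - 2 * u ^ 2 := by
      have h1 : (0:ℝ) ≤ cE - 2.3756 := by linarith [cE_lb]
      have h2 : (0:ℝ) ≤ u - 1.6487 := by linarith
      nlinarith [mul_nonneg h1 h2, mul_nonneg (mul_nonneg h1 h2) h2, mul_nonneg h2 h2]
    have polypos : 0 ≤ 4 * u * (u - 1) * (cE * (u - 1) - u) + 2 * cE * (u - 1) ^ 2 := by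
      have h3 := mul_nonneg (show (0:ℝ) ≤ u - 1 by linarith) hG
      nlinarith [h3]
    have hdiv : 4 * (u - 1) * (cE * (u - 1) - u) + cE * (u - 1) ^ 2 * (2 * u⁻¹)
        = (4 * u * (u - 1) * (cE * (u - 1) - u) + 2 * cE * (u - 1) ^ 2) * u⁻¹ := by
      field_simp
    have h2 : 0 ≤ 4 * (u - 1) * (cE * (u - 1) - u) + cE * (u - 1) ^ 2 * (2 * u⁻¹) := by
      rw [hdiv]
      exact mul_nonneg polypos (inv_nonneg.mpr hu0.le)
    simp only [HH1]
    nlinarith [key, h2]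

lemma regimeB {t : ℝ} (hts : sE ≤ t) :
    2 * t ^ 2 * Real.log t - t ^ 2 + 1 ≤ cE * (t - 1) ^ 2 * (2 * Real.log t) := by
  have mono : MonotoneOn HH (Set.Icc sE t) := by
    apply monotoneOn_of_deriv_nonneg (convex_Icc sE t) (contOn_HH sE_pos)
    · intro x hx
      rw [interior_Icc] at hx
      exact ((hd_HH (ne_of_gt (lt_trans sE_pos hx.1))).differentiableAt).differentiableWithinAt
    · intro x hx
      rw [interior_Icc] at hx
      rw [(hd_HH (ne_of_gt (lt_trans sE_pos hx.1))).deriv]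
      exact HH1_nonneg hx.1.le
  have h := mono (Set.left_mem_Icc.mpr hts) (Set.right_mem_Icc.mpr hts) hts
  rw [HH_sE] at h
  simp only [HH] at h
  linarith

lemma core {t M : ℝ} (ht : 0 < t) (hM : 1 ≤ M) (hL : 2 * Real.log t ≤ M) :
    2 * t ^ 2 * Real.log t - t ^ 2 + 1 ≤ cE * M * (t - 1) ^ 2 := by
  have hc0 : 0 ≤ cE := cE_pos.le
  rcases le_total t sE with h | h
  · have h1 := regimeA ht h
    nlinarith [mul_nonneg hc0 (sq_nonneg (t - 1))]
  · have h1 := regimeB h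
    have h2 : cE * (t - 1) ^ 2 * (2 * Real.log t) ≤ cE * (t - 1) ^ 2 * M :=
      mul_le_mul_of_nonneg_left hL (mul_nonneg hc0 (sq_nonneg (t - 1)))
    nlinarith

lemma pt {a b M : ℝ} (ha : 0 ≤ a) (hb : 0 ≤ b) (hM : 1 ≤ M) (hL : Real.log (a / b) ≤ M) :
    a * Real.log (a / b) - (a - b) ≤ cE * M * (Real.sqrt a - Real.sqrt b) ^ 2 := by
  rcases hb.eq_or_lt with hb0 | hb0
  · rw [← hb0, div_zero, Real.log_zero]
    have h1 : (0:ℝ) ≤ cE * M := mul_nonneg cE_pos.le (by linarith)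
    nlinarith [sq_nonneg (Real.sqrt a - Real.sqrt 0)]
  · rcases ha.eq_or_lt with ha0 | ha0
    · rw [← ha0, zero_div, Real.log_zero, Real.sqrt_zero]
      have h1 : (1:ℝ) ≤ cE * M := by nlinarith [cE_lb]
      have h2 : (0 - Real.sqrt b) ^ 2 = b := by
        rw [zero_sub, neg_sq, Real.sq_sqrt hb]
      rw [h2]
      nlinarith [hb0]
    · set t := Real.sqrt (a / b) with ht_def
      have ht : 0 < t := Real.sqrt_pos.mpr (div_pos ha0 hb0)
      have htsq : t ^ 2 = a / b := Real.sq_sqrt (div_nonneg ha hb)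
      have hlogt : 2 * Real.log t = Real.log (a / b) := by
        rw [ht_def, Real.log_sqrt (div_nonneg ha hb)]
        ring
      have hcore := core ht hM (by rw [hlogt]; exact hL)
      have hbt : Real.sqrt b * t = Real.sqrt a := by
        rw [ht_def, ← Real.sqrt_mul hb]
        congr 1
        field_simp
      have e1 : a = b * t ^ 2 := by
        rw [htsq]
        field_simp
      have e2 : (Real.sqrt a - Real.sqrt b) ^ 2 = b * (t - 1) ^ 2 := by
        calc (Real.sqrt a - Real.sqrt b) ^ 2 = (Real.sqrt b) ^ 2 * (t - 1) ^ 2 := by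
              rw [← hbt]; ring
          _ = b * (t - 1) ^ 2 := by rw [Real.sq_sqrt hb]
      have h := mul_le_mul_of_nonneg_left hcore hb
      rw [← hlogt, e2]
      nlinarith [h, e1]

/-- KL ≤ (2/(√e−1)²)·H²·max{1, sup log(f/g)}, stated with an arbitrary
pointwise upper bound `B` on the log-density ratio. -/
theorem stmt_1 {X : Type*} [MeasurableSpace X] (μ : Measure X)
    (f g : X → ℝ) (hf : Measurable f) (hg : Measurable g)
    (hf0 : ∀ x, 0 ≤ f x) (hg0 : ∀ x, 0 ≤ g x)
    (hf1 : ∫ x, f x ∂μ = 1) (hg1 : ∫ x, g x ∂μ = 1)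
    (B : ℝ) (hB : ∀ x, Real.log (f x / g x) ≤ B) :
    ∫ x, f x * Real.log (f x / g x) ∂μ ≤
      (2 / (Real.sqrt (Real.exp 1) - 1) ^ 2) *
        ((1 / 2) * ∫ x, (Real.sqrt (f x) - Real.sqrt (g x)) ^ 2 ∂μ) *
        max 1 B := by
  set Mx := max (1:ℝ) B with hMx
  have hMx1 : (1:ℝ) ≤ Mx := le_max_left _ _
  have hfi : Integrable f μ := by
    by_contra h
    rw [integral_undef h] at hf1
    norm_num at hf1
  have hgi : Integrable g μ := by
    by_contra h
    rw [integral_undef h] at hg1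
    norm_num at hg1
  have hmeas : Measurable fun x => (Real.sqrt (f x) - Real.sqrt (g x)) ^ 2 :=
    (hf.sqrt.sub hg.sqrt).pow_const 2
  have hsqi : Integrable (fun x => (Real.sqrt (f x) - Real.sqrt (g x)) ^ 2) μ := by
    apply Integrable.mono' (hfi.add hgi) hmeas.aestronglyMeasurable
    filter_upwards with x
    rw [Real.norm_eq_abs, abs_of_nonneg (sq_nonneg _)]
    simp only [Pi.add_apply]
    nlinarith [Real.sq_sqrt (hf0 x), Real.sq_sqrt (hg0 x), Real.sqrt_nonneg (f x),
      Real.sqrt_nonneg (g x), mul_nonneg (Real.sqrt_nonneg (f x)) (Real.sqrt_nonneg (g x))]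
  have hI0 : 0 ≤ ∫ x, (Real.sqrt (f x) - Real.sqrt (g x)) ^ 2 ∂μ :=
    integral_nonneg fun x => sq_nonneg _
  have hconst : (2:ℝ) / (Real.sqrt (Real.exp 1) - 1) ^ 2 = 2 * cE := by
    rw [cE, sE, div_eq_mul_inv]
  by_cases hint : Integrable (fun x => f x * Real.log (f x / g x)) μ
  · have key : ∀ x, f x * Real.log (f x / g x) - (f x - g x)
        ≤ cE * Mx * (Real.sqrt (f x) - Real.sqrt (g x)) ^ 2 :=
      fun x => pt (hf0 x) (hg0 x) hMx1 (le_trans (hB x) (le_max_right 1 B))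
    have h3 : Integrable (fun x => f x - g x) μ := hfi.sub hgi
    have h1 : Integrable (fun x => f x * Real.log (f x / g x) - (f x - g x)) μ :=
      hint.sub h3
    have h2 : Integrable (fun x => cE * Mx * (Real.sqrt (f x) - Real.sqrt (g x)) ^ 2) μ :=
      hsqi.const_mul _
    have hle := integral_mono h1 h2 key
    rw [integral_sub hint h3, integral_sub hfi hgi, hf1, hg1,
      integral_const_mul] at hle
    rw [hconst]
    nlinarith [hle]
  · rw [integral_undef hint, hconst]
    have h4 : 0 ≤ 2 * cE * (1 / 2 * ∫ x, (Real.sqrt (f x) - Real.sqrt (g x)) ^ 2 ∂μ) * Mx :=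
      mul_nonneg (mul_nonneg (by linarith [cE_pos]) (by linarith [hI0])) (by linarith)
    exact h4
end

section
/- Let m > 0 and let x, y > 0 satisfy |log(x/y)| ≤ m. Then −log((x+y)/2) ≤ (−log x − log y)/2 − (log(x/y))²/(8(m+1)). -/
open Real

private lemma core_s2 (m u : ℝ) (hm : 0 < m) (hu0 : 0 ≤ u) (hum : u ≤ m / 2) :
    u ^ 2 / (2 * (m + 1)) ≤ Real.log ((Real.exp u + Real.exp (-u)) / 2) := by
  have hch : (Real.exp u + Real.exp (-u)) / 2 = Real.cosh u := (Real.cosh_eq u).symm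
  rw [hch]
  rcases le_or_gt u 1 with hu1 | hu1
  · -- small u : cosh u ≥ 1 + u^2/2
    have hsinh : u / 2 ≤ Real.sinh (u / 2) := Real.self_le_sinh_iff.2 (by linarith)
    have hcosh : 1 + u ^ 2 / 2 ≤ Real.cosh u := by
      have h2 : Real.cosh (2 * (u / 2)) = Real.cosh (u / 2) ^ 2 + Real.sinh (u / 2) ^ 2 :=
        Real.cosh_two_mul (u / 2)
      have h3 : Real.cosh (u / 2) ^ 2 = Real.sinh (u / 2) ^ 2 + 1 := Real.cosh_sq (u / 2)
      have h4 : (u / 2) ^ 2 ≤ Real.sinh (u / 2) ^ 2 :=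
        pow_le_pow_left₀ (by linarith) hsinh 2
      have : (2 : ℝ) * (u / 2) = u := by ring
      rw [this] at h2
      nlinarith
    have hA : (0 : ℝ) < 1 + u ^ 2 / 2 := by positivity
    have hlog : Real.log (1 + u ^ 2 / 2) ≤ Real.log (Real.cosh u) :=
      Real.log_le_log hA hcosh
    have hlow : 1 - (1 + u ^ 2 / 2)⁻¹ ≤ Real.log (1 + u ^ 2 / 2) :=
      Real.one_sub_inv_le_log_of_pos hA
    have key : u ^ 2 / (2 * (m + 1)) ≤ 1 - (1 + u ^ 2 / 2)⁻¹ := by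
      have h1 : 1 - (1 + u ^ 2 / 2)⁻¹ = (u ^ 2 / 2) / (1 + u ^ 2 / 2) := by
        field_simp
        ring
      rw [h1, div_le_div_iff₀ (by positivity) hA]
      have hsq' : u ^ 2 ≤ m / 2 := by nlinarith
      have h4 : u ^ 2 * u ^ 2 ≤ u ^ 2 * (m / 2) :=
        mul_le_mul_of_nonneg_left hsq' (sq_nonneg u)
      nlinarith [h4, mul_nonneg (sq_nonneg u) hm.le]
    linarith
  · -- large u : cosh u ≥ exp u / 2
    have hcosh : Real.exp u / 2 ≤ Real.cosh u := by
      rw [Real.cosh_eq]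
      have := (Real.exp_pos (-u)).le
      linarith
    have hlog : Real.log (Real.exp u / 2) ≤ Real.log (Real.cosh u) :=
      Real.log_le_log (by positivity) hcosh
    have heq : Real.log (Real.exp u / 2) = u - Real.log 2 := by
      rw [Real.log_div (Real.exp_ne_zero u) (by norm_num), Real.log_exp]
    rw [heq] at hlog
    have hl2 : Real.log 2 < 0.6931471808 := Real.log_two_lt_d9
    have key : u ^ 2 / (2 * (m + 1)) ≤ u - Real.log 2 := by
      rw [div_le_iff₀ (by positivity)]
      nlinarith [mul_nonneg (sub_nonneg.2 hu1.le) hm.le,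
        mul_nonneg (sub_nonneg.2 hu1.le) (sub_nonneg.2 hu1.le)]
    linarith

private lemma core_abs (m u : ℝ) (hm : 0 < m) (hum : |u| ≤ m / 2) :
    u ^ 2 / (2 * (m + 1)) ≤ Real.log ((Real.exp u + Real.exp (-u)) / 2) := by
  rcases abs_cases u with ⟨h1, h2⟩ | ⟨h1, h2⟩
  · exact core_s2 m u hm (by linarith [abs_nonneg u, h1 ▸ abs_nonneg u]) (h1 ▸ hum)
  · have := core_s2 m (-u) hm (by linarith) (h1 ▸ hum)
    simpa [neg_neg, sq, add_comm] using this

theorem stmt_2 (m x y : ℝ) (hm : 0 < m) (hx : 0 < x) (hy : 0 < y)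
    (hratio : |Real.log (x / y)| ≤ m) :
    -Real.log ((x + y) / 2) ≤
      (-Real.log x - Real.log y) / 2 - (Real.log (x / y)) ^ 2 / (8 * (m + 1)) := by
  set a := Real.log x with ha
  set b := Real.log y with hb
  set u := (a - b) / 2 with hu
  have hlogdiv : Real.log (x / y) = a - b := Real.log_div hx.ne' hy.ne'
  have habs : |u| ≤ m / 2 := by
    rw [hu, abs_div, abs_two]
    rw [hlogdiv] at hratio
    linarith [abs_nonneg (a - b)]
  have hxy : (x + y) / 2 = Real.exp ((a + b) / 2) * ((Real.exp u + Real.exp (-u)) / 2) := by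
    have hxe : x = Real.exp a := (Real.exp_log hx).symm
    have hye : y = Real.exp b := (Real.exp_log hy).symm
    rw [mul_div_assoc' , mul_add, ← Real.exp_add, ← Real.exp_add]
    rw [show (a + b) / 2 + u = a by rw [hu]; ring,
      show (a + b) / 2 + -u = b by rw [hu]; ring]
    rw [← hxe, ← hye]
  have hchpos : 0 < (Real.exp u + Real.exp (-u)) / 2 := by positivity
  have hlogxy : Real.log ((x + y) / 2)
      = (a + b) / 2 + Real.log ((Real.exp u + Real.exp (-u)) / 2) := by
    rw [hxy, Real.log_mul (Real.exp_ne_zero _) hchpos.ne', Real.log_exp]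
  have hcore := core_abs m u hm habs
  have hsq : (Real.log (x / y)) ^ 2 / (8 * (m + 1)) = u ^ 2 / (2 * (m + 1)) := by
    rw [hlogdiv, hu]
    rw [div_eq_div_iff (by positivity) (by positivity)]
    ring
  rw [hlogxy, hsq]
  linarith
end

section
/- Let 0 < ε ≤ 1, C ≥ 1, let K ⊂ ℝ₊^d be convex and compact, and let B ⊂ K be a C-ratio cover of K. Then there exists A ⊂ K with |A| ≤ |B|·(3 + 4·log₂(4C/ε)/ε)^{d−1} that is a (1+ε)-ratio cover of K, i.e., for every θ ∈ K there is z ∈ A with θ_j ≤ (1+ε)·z_j for all j. -/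
open Real Finset

private lemma exp_mul_log_two_le (η : ℝ) (h0 : 0 ≤ η) (h1 : η ≤ 1) :
    Real.exp (η * Real.log 2) ≤ 1 + η := by
  have h := convexOn_exp.2 (Set.mem_univ (0:ℝ)) (Set.mem_univ (Real.log 2))
    (by linarith : (0:ℝ) ≤ 1 - η) h0 (by ring)
  simp only [smul_eq_mul, mul_zero, zero_add] at h
  rw [Real.exp_zero, Real.exp_log (by norm_num : (0:ℝ) < 2)] at h
  linarith

private lemma log_two_mul_le (η : ℝ) (h0 : 0 < η) (h1 : η ≤ 1) :
    η * Real.log 2 ≤ Real.log (1 + η) := by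
  have h := exp_mul_log_two_le η h0.le h1
  calc η * Real.log 2 = Real.log (Real.exp (η * Real.log 2)) := (Real.log_exp _).symm
    _ ≤ Real.log (1 + η) := Real.log_le_log (Real.exp_pos _) h

/-- Amplification: a C-ratio cover of a convex compact K ⊆ ℝ₊^d can be
upgraded to a (1+ε)-ratio cover of cardinality |B|·(3 + 4log₂(4C/ε)/ε)^{d−1}. -/
theorem stmt_16 (d : ℕ) (ε C : ℝ) (hε0 : 0 < ε) (hε1 : ε ≤ 1) (hC : 1 ≤ C)
    (K : Set (Fin d → ℝ)) (hKconv : Convex ℝ K) (hKcomp : IsCompact K)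
    (hKpos : ∀ θ ∈ K, ∀ j, 0 ≤ θ j)
    (B : Finset (Fin d → ℝ)) (hBsub : ↑B ⊆ K)
    (hBcov : ∀ θ ∈ K, ∃ b ∈ B, ∀ j, θ j ≤ C * b j) :
    ∃ A : Finset (Fin d → ℝ), ↑A ⊆ K ∧
      (A.card : ℝ) ≤ (B.card : ℝ) *
        (3 + 4 * Real.logb 2 (4 * C / ε) / ε) ^ (d - 1) ∧
      ∀ θ ∈ K, ∃ z ∈ A, ∀ j, θ j ≤ (1 + ε) * z j := by
  classical
  have hlogb40 : 0 ≤ Real.logb 2 (4 * C / ε) := by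
    apply Real.logb_nonneg (by norm_num)
    rw [le_div_iff₀ hε0]
    nlinarith
  have hM1 : (1:ℝ) ≤ 3 + 4 * Real.logb 2 (4 * C / ε) / ε := by
    have : 0 ≤ 4 * Real.logb 2 (4 * C / ε) / ε := by positivity
    linarith
  rcases d with _ | n
  · -- degenerate case d = 0
    refine ⟨B, hBsub, ?_, ?_⟩
    · rw [Nat.zero_sub, pow_zero, mul_one]
    · intro θ hθ
      obtain ⟨b, hb, -⟩ := hBcov θ hθ
      exact ⟨b, hb, fun j => j.elim0⟩
  -- main case d = n + 1
  set η : ℝ := ε / 4 with hηdef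
  have hη0 : 0 < η := by positivity
  have hη1 : η ≤ 1 / 4 := by rw [hηdef]; linarith
  have ht1 : (1:ℝ) < 1 + η := by linarith
  set ℓ : Fin (n + 1) := Fin.last n with hℓdef
  set L : ℤ := ⌊Real.logb (1 + η) η⌋ with hLdef
  set U : ℤ := ⌊Real.logb (1 + η) C⌋ with hUdef
  -- the mixing map
  set φ : (Fin (n+1) → ℝ) → (Fin (n+1) → ℝ) → (Fin (n+1) → ℝ) :=
    fun b z j => (1 - η) * z j + η * b j with hφdef
  have hφK : ∀ b ∈ K, ∀ z ∈ K, φ b z ∈ K := by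
    intro b hb z hz
    have hmem := hKconv hz hb (by linarith : (0:ℝ) ≤ 1 - η) hη0.le (by ring)
    have hrepr : φ b z = (1 - η) • z + η • b := by
      funext j
      simp [hφdef, smul_eq_mul]
    rw [hrepr]
    exact hmem
  set bin : (Fin (n+1) → ℝ) → (Fin (n+1) → ℝ) → Fin (n+1) → ℤ :=
    fun b θ j => if b j = 0 then 0 else ⌊Real.logb (1 + η) (φ b θ j / b j)⌋ with hbindef
  set S : (Fin (n+1) → ℝ) → (Fin n → ℤ) → Set (Fin (n+1) → ℝ) :=
    fun b m => {θ | θ ∈ K ∧ (∀ j, θ j ≤ C * b j) ∧ ∀ j : Fin n, bin b θ j.castSucc = m j}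
    with hSdef
  set sup : (Fin (n+1) → ℝ) → (Fin n → ℤ) → ℝ :=
    fun b m => sSup ((fun θ => θ ℓ) '' S b m) with hsupdef
  have hSsub : ∀ b m, S b m ⊆ K := fun b m θ hθ => hθ.1
  have hbdd : ∀ b m, BddAbove ((fun θ : Fin (n+1) → ℝ => θ ℓ) '' S b m) := by
    intro b m
    have hKb : BddAbove ((fun θ : Fin (n+1) → ℝ => θ ℓ) '' K) :=
      (hKcomp.image (continuous_apply ℓ)).bddAbove
    exact hKb.mono (Set.image_mono (hSsub b m))
  set P : (Fin (n+1) → ℝ) → (Fin n → ℤ) → (Fin (n+1) → ℝ) → Prop :=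
    fun b m z => z ∈ S b m ∧ sup b m ≤ (1 + ε / 2) * z ℓ with hPdef
  have hex : ∀ b m, (S b m).Nonempty → ∃ z, P b m z := by
    rintro b m ⟨θ0, hθ0⟩
    by_cases hs : sup b m ≤ 0
    · refine ⟨θ0, hθ0, hs.trans ?_⟩
      have h0 : 0 ≤ θ0 ℓ := hKpos θ0 (hSsub b m hθ0) ℓ
      nlinarith
    · push_neg at hs
      have hne : ((fun θ : Fin (n+1) → ℝ => θ ℓ) '' S b m).Nonempty :=
        ⟨θ0 ℓ, θ0, hθ0, rfl⟩
      have hlt : sup b m / (1 + ε / 2) < sup b m := by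
        rw [div_lt_iff₀ (by linarith)]
        nlinarith
      obtain ⟨y, ⟨z, hz, rfl⟩, hy⟩ := exists_lt_of_lt_csSup hne hlt
      refine ⟨z, hz, ?_⟩
      rw [div_lt_iff₀ (by linarith)] at hy
      linarith
  set f : (Fin (n+1) → ℝ) × (Fin n → ℤ) → (Fin (n+1) → ℝ) :=
    fun p => if h : ∃ z, P p.1 p.2 z then φ p.1 h.choose else p.1 with hfdef
  set A : Finset (Fin (n+1) → ℝ) :=
    Finset.image f (B ×ˢ Fintype.piFinset fun _ : Fin n => Finset.Icc L U) with hAdef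
  -- bin values of covered points lie in [L, U]
  have hbinmem : ∀ b ∈ K, ∀ θ ∈ K, (∀ j, θ j ≤ C * b j) →
      ∀ j, bin b θ j ∈ Finset.Icc L U := by
    intro b hbK θ hθK hθb j
    have hb0 : 0 ≤ b j := hKpos b hbK j
    have hθ0 : 0 ≤ θ j := hKpos θ hθK j
    rw [Finset.mem_Icc]
    by_cases hbj : b j = 0
    · simp only [hbindef, if_pos hbj]
      constructor
      · have h1 : Real.logb (1 + η) η ≤ 0 :=
          Real.logb_nonpos ht1 hη0.le (by linarith)
        rw [hLdef]
        calc ⌊Real.logb (1 + η) η⌋ ≤ ⌊(0:ℝ)⌋ := Int.floor_le_floor h1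
          _ = 0 := Int.floor_zero
      · have h1 : 0 ≤ Real.logb (1 + η) C := Real.logb_nonneg ht1 hC
        rw [hUdef]
        exact Int.le_floor.mpr (by exact_mod_cast h1)
    · have hbj' : 0 < b j := lt_of_le_of_ne hb0 (Ne.symm hbj)
      have hr1 : η ≤ φ b θ j / b j := by
        rw [le_div_iff₀ hbj']
        simp only [hφdef]
        nlinarith
      have hr2 : φ b θ j / b j ≤ C := by
        rw [div_le_iff₀ hbj']
        simp only [hφdef]
        have e1 : (1 - η) * θ j ≤ (1 - η) * (C * b j) :=
          mul_le_mul_of_nonneg_left (hθb j) (by linarith)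
        have e2 : η * b j ≤ η * (C * b j) :=
          mul_le_mul_of_nonneg_left (le_mul_of_one_le_left hb0 hC) hη0.le
        nlinarith
      simp only [hbindef, if_neg hbj]
      exact ⟨Int.floor_le_floor (Real.logb_le_logb_of_le ht1 hη0 hr1),
        Int.floor_le_floor (Real.logb_le_logb_of_le ht1 (lt_of_lt_of_le hη0 hr1) hr2)⟩
  -- A ⊆ K
  have hAK : ↑A ⊆ K := by
    intro x hx
    rw [hAdef, Finset.coe_image] at hx
    obtain ⟨p, hp, rfl⟩ := hx
    rw [Finset.mem_coe, Finset.mem_product] at hp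
    have hbK : p.1 ∈ K := hBsub hp.1
    by_cases h : ∃ z, P p.1 p.2 z
    · have : f p = φ p.1 h.choose := by rw [hfdef]; exact dif_pos h
      rw [this]
      exact hφK p.1 hbK _ (hSsub _ _ h.choose_spec.1)
    · have : f p = p.1 := by rw [hfdef]; exact dif_neg h
      rw [this]; exact hbK
  refine ⟨A, hAK, ?_, ?_⟩
  · -- cardinality bound
    have hLU : L ≤ U := by
      exact Int.floor_le_floor (Real.logb_le_logb_of_le ht1 hη0 (by linarith))
    have h1 : A.card ≤ B.card * (Finset.Icc L U).card ^ n := by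
      calc A.card ≤ (B ×ˢ Fintype.piFinset fun _ : Fin n => Finset.Icc L U).card :=
          Finset.card_image_le
        _ = B.card * (Finset.Icc L U).card ^ n := by
          rw [Finset.card_product, Fintype.card_piFinset_const]
    have h2 : ((Finset.Icc L U).card : ℝ) = ((U : ℝ) + 1 - L) := by
      have := Int.card_Icc_of_le (a := L) (b := U) (by linarith)
      have h3 : (((Finset.Icc L U).card : ℤ) : ℝ) = (((U + 1 - L : ℤ)) : ℝ) := by
        exact_mod_cast congrArg (fun x : ℤ => (x : ℝ)) this
      push_cast at h3
      linarith
    have hkey : (U : ℝ) + 1 - L ≤ 3 + 4 * Real.logb 2 (4 * C / ε) / ε := by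
      have hUb : (U : ℝ) ≤ Real.logb (1+η) C := Int.floor_le _
      have hLb : Real.logb (1+η) η - 1 < (L : ℝ) := Int.sub_one_lt_floor _
      have hdiff : Real.logb (1+η) C - Real.logb (1+η) η = Real.logb (1+η) (C / η) :=
        (Real.logb_div (by linarith) (ne_of_gt hη0)).symm
      have hCη : C / η = 4 * C / ε := by
        rw [hηdef]; field_simp
      have hCη1 : (1:ℝ) ≤ C / η := by
        rw [le_div_iff₀ hη0]; linarith
      have hlogpos : 0 ≤ Real.log (C / η) := Real.log_nonneg hCη1
      have hlog2 : 0 < Real.log 2 := Real.log_pos (by norm_num)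
      have hlb : η * Real.log 2 ≤ Real.log (1 + η) := log_two_mul_le η hη0 (by linarith)
      have hmain : Real.logb (1+η) (C / η) ≤ 4 * Real.logb 2 (4 * C / ε) / ε := by
        rw [Real.logb]
        calc Real.log (C / η) / Real.log (1 + η)
            ≤ Real.log (C / η) / (η * Real.log 2) := by
              apply div_le_div_of_nonneg_left hlogpos (by positivity) hlb
          _ = 4 * (Real.log (C / η) / Real.log 2) / ε := by
              rw [hηdef]; field_simp
          _ = 4 * Real.logb 2 (4 * C / ε) / ε := by rw [← Real.logb, hCη]
      linarith
    have hpos : (0:ℝ) ≤ (U : ℝ) + 1 - L := by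
      have : (L:ℝ) ≤ U := by exact_mod_cast hLU
      linarith
    calc (A.card : ℝ) ≤ (B.card : ℝ) * ((Finset.Icc L U).card : ℝ) ^ n := by
          exact_mod_cast h1
      _ = (B.card : ℝ) * ((U : ℝ) + 1 - L) ^ n := by rw [h2]
      _ ≤ (B.card : ℝ) * (3 + 4 * Real.logb 2 (4 * C / ε) / ε) ^ n := by
          apply mul_le_mul_of_nonneg_left (pow_le_pow_left₀ hpos hkey n) (Nat.cast_nonneg _)
      _ = (B.card : ℝ) * (3 + 4 * Real.logb 2 (4 * C / ε) / ε) ^ (n + 1 - 1) := by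
          norm_num
  · -- covering property
    intro θ hθ
    obtain ⟨b, hbB, hθb⟩ := hBcov θ hθ
    have hbK : b ∈ K := hBsub hbB
    set m : Fin n → ℤ := fun j => bin b θ j.castSucc with hmdef
    have hθS : θ ∈ S b m := ⟨hθ, hθb, fun j => rfl⟩
    have hexz : ∃ z, P b m z := hex b m ⟨θ, hθS⟩
    set z : Fin (n+1) → ℝ := hexz.choose with hzdef
    have hzP : P b m z := hexz.choose_spec
    have hzS : z ∈ S b m := hzP.1
    have hzsup : sup b m ≤ (1 + ε / 2) * z ℓ := hzP.2
    have hzK : z ∈ K := hSsub b m hzS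
    have hfeq : f (b, m) = φ b z := by rw [hfdef]; exact dif_pos hexz
    have hfA : f (b, m) ∈ A := by
      rw [hAdef]
      apply Finset.mem_image_of_mem
      rw [Finset.mem_product]
      exact ⟨hbB, Fintype.mem_piFinset.mpr fun j => hbinmem b hbK θ hθ hθb j.castSucc⟩
    clear hzdef hmdef
    clear_value z m
    refine ⟨f (b, m), hfA, ?_⟩
    intro j
    rw [hfeq]
    by_cases hjℓ : j = ℓ
    · rw [hjℓ]
      have hθℓ : θ ℓ ≤ sup b m := le_csSup (hbdd b m) ⟨θ, hθS, rfl⟩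
      have hz0 : 0 ≤ z ℓ := hKpos z hzK ℓ
      have hb0 : 0 ≤ b ℓ := hKpos b hbK ℓ
      have e : (0:ℝ) ≤ ε * (1 - ε) := mul_nonneg hε0.le (by linarith)
      have hcoef2 : (0:ℝ) ≤ (1 + ε) * (1 - η) - (1 + ε / 2) := by
        rw [hηdef]; linarith only [e]
      have hprod2 := mul_nonneg hcoef2 hz0
      have hbη := mul_nonneg (by linarith : (0:ℝ) ≤ 1 + ε)
        (mul_nonneg hη0.le hb0)
      simp only [hφdef]
      linarith only [hθℓ, hzsup, hprod2, hbη]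
    · obtain ⟨j', rfl⟩ := Fin.exists_castSucc_eq.mpr hjℓ
      set jj := j'.castSucc with hjjdef
      have hb0 : 0 ≤ b jj := hKpos b hbK jj
      have hθ0 : 0 ≤ θ jj := hKpos θ hθ jj
      have hz0 : 0 ≤ z jj := hKpos z hzK jj
      by_cases hbj : b jj = 0
      · have hθle : θ jj ≤ 0 := by
          have := hθb jj
          rw [hbj] at this
          linarith
        have h4 : (0:ℝ) ≤ (1 + ε) * ((1 - η) * z jj + η * b jj) := by
          apply mul_nonneg (by linarith)
          have h5 := mul_nonneg (by linarith : (0:ℝ) ≤ 1 - η) hz0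
          have h6 := mul_nonneg hη0.le hb0
          linarith only [h5, h6]
        simp only [hφdef]
        linarith only [hθle, h4]
      · have hbj' : 0 < b jj := lt_of_le_of_ne hb0 (Ne.symm hbj)
        have hrθ1 : η ≤ φ b θ jj / b jj := by
          rw [le_div_iff₀ hbj']
          simp only [hφdef]
          linarith only [mul_nonneg (by linarith : (0:ℝ) ≤ 1 - η) hθ0]
        have hrz1 : η ≤ φ b z jj / b jj := by
          rw [le_div_iff₀ hbj']
          simp only [hφdef]
          linarith only [mul_nonneg (by linarith : (0:ℝ) ≤ 1 - η) hz0]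
        have hrθpos : 0 < φ b θ jj / b jj := lt_of_lt_of_le hη0 hrθ1
        have hrzpos : 0 < φ b z jj / b jj := lt_of_lt_of_le hη0 hrz1
        have hfloor : ⌊Real.logb (1+η) (φ b θ jj / b jj)⌋
            = ⌊Real.logb (1+η) (φ b z jj / b jj)⌋ := by
          have h1 : bin b z jj = m j' := hzS.2.2 j'
          have h2 : bin b θ jj = m j' := hθS.2.2 j'
          have h3 : bin b θ jj = bin b z jj := by rw [h1, h2]
          simpa only [hbindef, if_neg hbj] using h3
        have hlt : Real.logb (1+η) (φ b θ jj / b jj)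
            < Real.logb (1+η) ((1+η) * (φ b z jj / b jj)) := by
          rw [Real.logb_mul (by linarith) (ne_of_gt hrzpos),
            Real.logb_self_eq_one ht1]
          calc Real.logb (1+η) (φ b θ jj / b jj)
              < ⌊Real.logb (1+η) (φ b θ jj / b jj)⌋ + 1 := Int.lt_floor_add_one _
            _ = ⌊Real.logb (1+η) (φ b z jj / b jj)⌋ + 1 := by rw [hfloor]
            _ ≤ 1 + Real.logb (1+η) (φ b z jj / b jj) := by
                linarith [Int.floor_le (Real.logb (1+η) (φ b z jj / b jj))]
        have hratio : φ b θ jj / b jj < (1+η) * (φ b z jj / b jj) :=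
          (Real.logb_lt_logb_iff ht1 hrθpos (by positivity)).mp hlt
        have hφlt : φ b θ jj < (1 + η) * φ b z jj := by
          have h2 := mul_lt_mul_of_pos_right hratio hbj'
          rwa [div_mul_cancel₀ _ (ne_of_gt hbj'), mul_assoc,
            div_mul_cancel₀ _ (ne_of_gt hbj')] at h2
        have hφz0 : 0 ≤ φ b z jj := by
          simp only [hφdef]
          linarith only [mul_nonneg (by linarith : (0:ℝ) ≤ 1 - η) hz0,
            mul_nonneg hη0.le hb0]
        have e : (0:ℝ) ≤ ε * (2 - ε) := mul_nonneg hε0.le (by linarith)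
        have hcoef : (0:ℝ) ≤ (1 + ε) * (1 - η) - (1 + η) := by
          rw [hηdef]; linarith only [e]
        have hprod := mul_nonneg hcoef hφz0
        have h1η : (0:ℝ) < 1 - η := by linarith
        simp only [hφdef] at hφlt hφz0 hprod ⊢
        have hmul : θ jj * (1 - η) ≤
            ((1 + ε) * ((1 - η) * z jj + η * b jj)) * (1 - η) := by
          linarith only [hφlt, hprod, mul_nonneg hη0.le hb0]
        exact le_of_mul_le_mul_right hmul h1η
end

section
/- Let p* and q be probability densities with respect to μ, let X₁,…,X_n be i.i.d. from p*, and define the Bayesian model-averaging weight α̂ = Π q(Xᵢ) / (Π p*(Xᵢ) + Π q(Xᵢ)) and p̂ = (1−α̂)p* + α̂ q. Then for any δ ∈ (0,1), with probability at least 1−δ it holds that sup_x log(p*(x)/p̂(x)) ≤ log(2/δ). -/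
open MeasureTheory

private lemma lintegral_pi_prod_aux {X : Type*} [MeasurableSpace X] (m : Measure X)
    [SigmaFinite m] (h : X → ENNReal) (hm : Measurable h) :
    ∀ n : ℕ, ∫⁻ ω, ∏ i, h (ω i) ∂(Measure.pi fun _ : Fin n => m)
      = (∫⁻ x, h x ∂m) ^ n := by
  intro n
  induction n with
  | zero =>
      simp [Measure.pi_of_empty]
  | succ n ih =>
      have hmp := measurePreserving_piFinSuccAbove (fun _ : Fin (n + 1) => m) 0
      set G : X × (Fin n → X) → ENNReal := fun p => h p.1 * ∏ j, h (p.2 j) with hG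
      have hGmeas : Measurable G := by
        apply (hm.comp measurable_fst).mul
        exact Finset.measurable_prod _ fun j _ =>
          hm.comp ((measurable_pi_apply j).comp measurable_snd)
      have hcomp : ∀ ω : Fin (n + 1) → X,
          (∏ i, h (ω i)) = G (MeasurableEquiv.piFinSuccAbove (fun _ => X) 0 ω) := by
        intro ω
        rw [Fin.prod_univ_succ]
        rfl
      calc ∫⁻ ω, ∏ i, h (ω i) ∂(Measure.pi fun _ : Fin (n + 1) => m)
          = ∫⁻ ω, G (MeasurableEquiv.piFinSuccAbove (fun _ => X) 0 ω)
              ∂(Measure.pi fun _ : Fin (n + 1) => m) := by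
            simp_rw [hcomp]
        _ = ∫⁻ p, G p ∂(m.prod (Measure.pi fun _ : Fin n => m)) :=
            hmp.lintegral_comp hGmeas
        _ = ∫⁻ x, ∫⁻ y, h x * ∏ j, h (y j) ∂(Measure.pi fun _ : Fin n => m) ∂m :=
            lintegral_prod _ hGmeas.aemeasurable
        _ = ∫⁻ x, h x * ∫⁻ y, ∏ j, h (y j) ∂(Measure.pi fun _ : Fin n => m) ∂m := by
            congr 1
            ext x
            exact lintegral_const_mul _ (Finset.measurable_prod _ fun j _ =>
              hm.comp (measurable_pi_apply j))
        _ = (∫⁻ x, h x ∂m) ^ (n + 1) := by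
            rw [ih, lintegral_mul_const _ hm, pow_succ, mul_comm]

/-- Pointwise bound: if `δ * Q ≤ P` with everything nonnegative, then the log-ratio
is at most `log (2/δ)`. -/
private lemma pointwise_bound {p qx P Q δ : ℝ} (hp : 0 ≤ p) (hqx : 0 ≤ qx)
    (hP : 0 ≤ P) (hQ : 0 ≤ Q) (hδ0 : 0 < δ) (hδ1 : δ < 1) (hPQ : δ * Q ≤ P) :
    Real.log (p / ((1 - Q / (P + Q)) * p + (Q / (P + Q)) * qx)) ≤ Real.log (2 / δ) := by
  have h2δ : (1 : ℝ) ≤ 2 / δ := by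
    rw [le_div_iff₀ hδ0]; linarith
  have hlog2δ : 0 ≤ Real.log (2 / δ) := Real.log_nonneg h2δ
  rcases eq_or_lt_of_le hp with hp0 | hp0
  · rw [← hp0]
    simpa using hlog2δ
  rcases eq_or_lt_of_le hP with hP0 | hP0
  · -- P = 0 forces Q = 0
    have hQ0 : Q = 0 := le_antisymm (by nlinarith) hQ
    have hE : (1 - Q / (P + Q)) * p + (Q / (P + Q)) * qx = p := by
      rw [← hP0, hQ0]; norm_num
    rw [hE, div_self (ne_of_gt hp0), Real.log_one]
    exact hlog2δ
  · -- P > 0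
    have hPQpos : 0 < P + Q := by linarith
    have h1α : 1 - Q / (P + Q) = P / (P + Q) := by field_simp; ring
    have hfrac : δ / 2 ≤ P / (P + Q) := by
      rw [div_le_div_iff₀ (by norm_num) hPQpos]
      nlinarith
    have hαq : 0 ≤ Q / (P + Q) * qx :=
      mul_nonneg (div_nonneg hQ hPQpos.le) hqx
    set D := (1 - Q / (P + Q)) * p + (Q / (P + Q)) * qx with hD
    have hDge : δ / 2 * p ≤ D := by
      rw [hD, h1α]
      nlinarith [mul_le_mul_of_nonneg_right hfrac hp]
    have hDpos : 0 < D := lt_of_lt_of_le (by positivity) hDge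
    have hratio : p / D ≤ 2 / δ := by
      have h1 : p / D ≤ p / (δ / 2 * p) :=
        div_le_div_of_nonneg_left hp (by positivity) hDge
      have h2 : p / (δ / 2 * p) = 2 / δ := by
        field_simp
      linarith [h1, h2.le, h2.ge]
    exact Real.log_le_log (by positivity) hratio

/-- With probability at least 1−δ, the Bayesian model-averaging predictor
p̂ = (1−α̂)p* + α̂q satisfies sup_x log(p*(x)/p̂(x)) ≤ log(2/δ). -/
theorem stmt_19 {X : Type*} [MeasurableSpace X] (μ : Measure X) (n : ℕ)
    (pstar q : X → ℝ)
    (hstar0 : ∀ x, 0 ≤ pstar x) (hq0 : ∀ x, 0 ≤ q x)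
    (hstarm : Measurable pstar) (hqm : Measurable q)
    (hstar1 : ∫ x, pstar x ∂μ = 1) (hq1 : ∫ x, q x ∂μ = 1)
    (δ : ℝ) (hδ0 : 0 < δ) (hδ1 : δ < 1) :
    Measure.pi (fun _ : Fin n => μ.withDensity (fun x => ENNReal.ofReal (pstar x)))
      {ω : Fin n → X | ∀ x,
        Real.log (pstar x /
          ((1 - (∏ i, q (ω i)) / ((∏ i, pstar (ω i)) + ∏ i, q (ω i))) * pstar x +
            ((∏ i, q (ω i)) / ((∏ i, pstar (ω i)) + ∏ i, q (ω i))) * q x)) ≤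
        Real.log (2 / δ)} ≥
      ENNReal.ofReal (1 - δ) := by
  -- basic integrability
  have hpint : Integrable pstar μ := by
    by_contra hc
    rw [integral_undef hc] at hstar1
    norm_num at hstar1
  have hqint : Integrable q μ := by
    by_contra hc
    rw [integral_undef hc] at hq1
    norm_num at hq1
  set f : X → ENNReal := fun x => ENNReal.ofReal (pstar x) with hf
  have hfm : Measurable f := hstarm.ennreal_ofReal
  set m : Measure X := μ.withDensity f with hmdef
  have hm1 : ∫⁻ x, f x ∂μ = 1 := by
    rw [← ofReal_integral_eq_lintegral_ofReal hpint
      (Filter.Eventually.of_forall hstar0), hstar1, ENNReal.ofReal_one]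
  have hq1' : ∫⁻ x, ENNReal.ofReal (q x) ∂μ = 1 := by
    rw [← ofReal_integral_eq_lintegral_ofReal hqint
      (Filter.Eventually.of_forall hq0), hq1, ENNReal.ofReal_one]
  haveI hmprob : IsProbabilityMeasure m := by
    constructor
    rw [hmdef, withDensity_apply _ MeasurableSet.univ, setLIntegral_univ, hm1]
  set ν : Measure (Fin n → X) := Measure.pi (fun _ : Fin n => m) with hνdef
  haveI : IsProbabilityMeasure ν := by
    rw [hνdef]; infer_instance
  -- the likelihood ratio
  set h : X → ENNReal := fun x => ENNReal.ofReal (q x) / f x with hh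
  have hhm : Measurable h := hqm.ennreal_ofReal.div hfm
  have hint : ∫⁻ x, h x ∂m ≤ 1 := by
    rw [hmdef, lintegral_withDensity_eq_lintegral_mul μ hfm hhm]
    calc ∫⁻ x, (f * h) x ∂μ ≤ ∫⁻ x, ENNReal.ofReal (q x) ∂μ := by
          apply lintegral_mono
          intro x
          simp only [Pi.mul_apply, hh, hf]
          rcases eq_or_lt_of_le (hstar0 x) with hx | hx
          · rw [← hx]; simp
          · rw [ENNReal.mul_div_cancel (by simp [ENNReal.ofReal_pos, hx])
              ENNReal.ofReal_ne_top]
      _ = 1 := hq1'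
  -- the good event
  set G : Set (Fin n → X) := {ω | δ * ∏ i, q (ω i) ≤ ∏ i, pstar (ω i)} with hGdef
  have hprodq : Measurable fun ω : Fin n → X => ∏ i, q (ω i) :=
    Finset.measurable_prod _ fun i _ => hqm.comp (measurable_pi_apply i)
  have hprodp : Measurable fun ω : Fin n → X => ∏ i, pstar (ω i) :=
    Finset.measurable_prod _ fun i _ => hstarm.comp (measurable_pi_apply i)
  have hGmeas : MeasurableSet G :=
    measurableSet_le (measurable_const.mul hprodq) hprodp
  -- a.e. the densities at samples are positive
  have hpos : ∀ᵐ ω ∂ν, ∀ i, 0 < pstar (ω i) := by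
    rw [ae_all_iff]
    intro i
    have hNm : MeasurableSet {x : X | ¬ 0 < pstar x} := by
      simp only [not_lt]
      exact measurableSet_le hstarm measurable_const
    have hmN : m {x | ¬ 0 < pstar x} = 0 := by
      rw [hmdef, withDensity_apply _ hNm]
      rw [setLIntegral_congr_fun hNm
        (fun x hx => by
          simp only [Set.mem_setOf_eq, not_lt] at hx
          show f x = 0
          simp [hf, ENNReal.ofReal_eq_zero, hx])]
      simp
    have : {ω : Fin n → X | ¬ 0 < pstar (ω i)}
        = (fun ω : Fin n → X => ω i) ⁻¹' {x | ¬ 0 < pstar x} := rfl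
    rw [ae_iff]
    rw [this]
    classical
    rw [Set.eval_preimage]
    rw [hνdef, Measure.pi_pi]
    exact Finset.prod_eq_zero (Finset.mem_univ i) (by simpa [not_lt] using hmN)
  -- Markov-type bound on the complement of G
  have hGc : ν Gᶜ ≤ ENNReal.ofReal δ := by
    have hind : ∫⁻ ω, Gᶜ.indicator (fun _ => (1 : ENNReal)) ω ∂ν = ν Gᶜ :=
      lintegral_indicator_one hGmeas.compl
    rw [← hind]
    have hbound : ∀ᵐ ω ∂ν, Gᶜ.indicator (fun _ => (1 : ENNReal)) ω
        ≤ ENNReal.ofReal δ * ∏ i, h (ω i) := by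
      filter_upwards [hpos] with ω hω
      by_cases hωG : ω ∈ Gᶜ
      · rw [Set.indicator_of_mem hωG]
        have hPpos : 0 < ∏ i, pstar (ω i) :=
          Finset.prod_pos fun i _ => hω i
        have hlt : ∏ i, pstar (ω i) < δ * ∏ i, q (ω i) := by
          simpa [hGdef, not_le] using hωG
        have hhval : (∏ i, h (ω i))
            = ENNReal.ofReal ((∏ i, q (ω i)) / ∏ i, pstar (ω i)) := by
          have : ∀ i : Fin n, h (ω i) = ENNReal.ofReal (q (ω i) / pstar (ω i)) := by
            intro i
            simp only [hh, hf]
            rw [ENNReal.ofReal_div_of_pos (hω i)]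
          rw [Finset.prod_congr rfl fun i _ => this i,
            ← ENNReal.ofReal_prod_of_nonneg
              (fun i _ => div_nonneg (hq0 _) (hω i).le),
            ← Finset.prod_div_distrib]
        rw [hhval, ← ENNReal.ofReal_mul hδ0.le]
        rw [show (1 : ENNReal) = ENNReal.ofReal 1 by simp]
        apply ENNReal.ofReal_le_ofReal
        rw [mul_div_assoc'] at *
        rw [le_div_iff₀ hPpos]
        linarith
      · rw [Set.indicator_of_notMem hωG]
        exact zero_le
    calc ∫⁻ ω, Gᶜ.indicator (fun _ => (1 : ENNReal)) ω ∂ν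
        ≤ ∫⁻ ω, ENNReal.ofReal δ * ∏ i, h (ω i) ∂ν := lintegral_mono_ae hbound
      _ = ENNReal.ofReal δ * ∫⁻ ω, ∏ i, h (ω i) ∂ν :=
          lintegral_const_mul _ (Finset.measurable_prod _ fun i _ =>
            hhm.comp (measurable_pi_apply i))
      _ = ENNReal.ofReal δ * (∫⁻ x, h x ∂m) ^ n := by
          rw [hνdef, lintegral_pi_prod_aux m h hhm n]
      _ ≤ ENNReal.ofReal δ * 1 :=
          mul_le_mul_right (pow_le_one' hint n) _
      _ = ENNReal.ofReal δ := mul_one _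
  -- the good event is contained in the target event
  have hsub : G ⊆ {ω : Fin n → X | ∀ x,
      Real.log (pstar x /
        ((1 - (∏ i, q (ω i)) / ((∏ i, pstar (ω i)) + ∏ i, q (ω i))) * pstar x +
          ((∏ i, q (ω i)) / ((∏ i, pstar (ω i)) + ∏ i, q (ω i))) * q x)) ≤
      Real.log (2 / δ)} := by
    intro ω hωG x
    exact pointwise_bound (hstar0 x) (hq0 x)
      (Finset.prod_nonneg fun i _ => hstar0 _)
      (Finset.prod_nonneg fun i _ => hq0 _) hδ0 hδ1 hωG
  -- conclude
  have hGlb : ENNReal.ofReal (1 - δ) ≤ ν G := by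
    have huniv : (1 : ENNReal) ≤ ν G + ν Gᶜ := by
      rw [← measure_univ (μ := ν)]
      rw [← Set.union_compl_self G]
      exact measure_union_le _ _
    have h1 : (1 : ENNReal) ≤ ν G + ENNReal.ofReal δ :=
      le_trans huniv (add_le_add_right hGc _)
    have h2 : ENNReal.ofReal (1 - δ) ≤ 1 - ENNReal.ofReal δ := by
      rw [ENNReal.ofReal_sub _ hδ0.le, ENNReal.ofReal_one]
    calc ENNReal.ofReal (1 - δ) ≤ 1 - ENNReal.ofReal δ := h2
      _ ≤ ν G := by
          rw [tsub_le_iff_right]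
          exact h1.trans (by rw [add_comm])
  exact le_trans hGlb (measure_mono hsub)
end
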